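/- If G is a partial k-tree (equivalently, a graph of treewidth at most k), then gd(G) ≤ k + 1. -/

import Mathlib

/-!
A positive semidefinite matrix restricted to a bag of at most `k + 1` vertices is the Gram matrix
of vectors in `ℝ^(k+1)`. Grow a subtree of the decomposition one node `j` at a time, attached to
a node `p` of the current subtree: by the subtree property of the decomposition, `bag j` meets the
bags realized so far only inside `bag p`, where the old vectors and a fresh Gram representation of
`bag j` have the same Gram matrix and hence differ by a linear isometry of `ℝ^(k+1)`. Moving the
new vectors by that isometry glues the two. The Gram matrix of the final vectors has rank at most
`k + 1` and agrees with the given matrix on every pair of vertices sharing a bag.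
-/

open Matrix Finset

/-- The Gram dimension of a graph `G`: the smallest integer `k ≥ 1` such that every
positive semidefinite matrix indexed by the vertices admits a positive semidefinite
matrix of rank at most `k` agreeing with it on the diagonal and on the edges of `G`. -/
noncomputable def gd {V : Type} [Fintype V] (G : SimpleGraph V) : ℕ :=
  sInf {k : ℕ | 1 ≤ k ∧ ∀ X : Matrix V V ℝ, X.PosSemidef →
    ∃ Y : Matrix V V ℝ, Y.PosSemidef ∧ Y.rank ≤ k ∧
      (∀ i, Y i i = X i i) ∧ (∀ i j, G.Adj i j → Y i j = X i j)}

open Module SimpleGraph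
open scoped InnerProductSpace

section Gram

variable {α E : Type*} [Fintype α] [NormedAddCommGroup E] [InnerProductSpace ℝ E]

open scoped MatrixOrder in
theorem Matrix.PosSemidef.exists_gram_eq [FiniteDimensional ℝ E] {M : Matrix α α ℝ}
    (hM : M.PosSemidef) (hcard : Fintype.card α ≤ finrank ℝ E) : ∃ f : α → E, gram ℝ f = M := by
  classical
  obtain ⟨B, rfl⟩ := CStarAlgebra.nonneg_iff_eq_star_mul_self.mp hM.nonneg
  obtain ⟨e⟩ : Nonempty (α ↪ Fin (finrank ℝ E)) :=
    Function.Embedding.nonempty_of_card_le (by simpa using hcard)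
  set b := stdOrthonormalBasis ℝ E ∘ e
  have hb : Orthonormal ℝ b := (stdOrthonormalBasis ℝ E).orthonormal.comp e e.injective
  refine ⟨fun a => ∑ c, B c a • b c, ?_⟩
  ext a a'
  rw [gram_apply, hb.inner_sum]
  simp [mul_apply, star_eq_conjTranspose]

theorem Matrix.rank_gram_le_finrank [FiniteDimensional ℝ E] (g : α → E) :
    (gram ℝ g).rank ≤ finrank ℝ E := by
  rw [gram_eq_conjTranspose_mul (stdOrthonormalBasis ℝ E)]
  exact (rank_mul_le_right _ _).trans ((rank_le_card_height _).trans (by simp))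

theorem inner_linearCombination_eq_of_gram_eq {f g : α → E} (h : gram ℝ f = gram ℝ g)
    (c d : α → ℝ) :
    ⟪Fintype.linearCombination ℝ f c, Fintype.linearCombination ℝ f d⟫_ℝ =
      ⟪Fintype.linearCombination ℝ g c, Fintype.linearCombination ℝ g d⟫_ℝ := by
  have hfg (a b : α) : ⟪f a, f b⟫_ℝ = ⟪g a, g b⟫_ℝ := by
    simpa only [gram_apply] using congr_fun₂ h a b
  simp only [Fintype.linearCombination_apply, sum_inner, inner_sum, real_inner_smul_left,
    real_inner_smul_right, hfg]

theorem exists_linearIsometry_comp_eq_of_gram_eq [FiniteDimensional ℝ E] {f g : α → E}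
    (h : gram ℝ f = gram ℝ g) : ∃ O : E →ₗᵢ[ℝ] E, O ∘ f = g := by
  classical
  set F := Fintype.linearCombination ℝ f
  set G := Fintype.linearCombination ℝ g
  have hFG := inner_linearCombination_eq_of_gram_eq h
  have hker : LinearMap.ker F ≤ LinearMap.ker G := fun c hc => by
    rw [LinearMap.mem_ker, ← inner_self_eq_zero (𝕜 := ℝ), ← hFG, LinearMap.mem_ker.mp hc,
      inner_zero_left]
  -- `F c ↦ G c`, well defined on the range of `F` since `ker F ≤ ker G`
  let T : LinearMap.range F →ₗ[ℝ] E :=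
    (LinearMap.ker F).liftQ G hker ∘ₗ F.quotKerEquivRange.symm.toLinearMap
  have hT (c : α → ℝ) : T ⟨F c, LinearMap.mem_range_self F c⟩ = G c := by
    simp [T]
  have hTnorm : ∀ x, ‖T x‖ = ‖x‖ := by
    rintro ⟨_, c, rfl⟩
    rw [hT, ← sq_eq_sq₀ (norm_nonneg _) (norm_nonneg _), ← real_inner_self_eq_norm_sq,
      ← real_inner_self_eq_norm_sq, ← hFG]
    rfl
  refine ⟨LinearIsometry.extend ⟨T, hTnorm⟩, funext fun a => ?_⟩
  have hf : f a = F (Pi.single a 1) := by simp [F]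
  have hg : g a = G (Pi.single a 1) := by simp [G]
  simp only [Function.comp_apply, hf, hg]
  exact (LinearIsometry.extend_apply _ ⟨_, LinearMap.mem_range_self F _⟩).trans (hT _)

end Gram

section GramRealization

variable {V E : Type*} [NormedAddCommGroup E] [InnerProductSpace ℝ E]

def GramRealizesOn (X : Matrix V V ℝ) (g : V → E) (S : Finset V) : Prop :=
  ∀ u ∈ S, ∀ v ∈ S, ⟪g u, g v⟫_ℝ = X u v

variable [FiniteDimensional ℝ E] {X : Matrix V V ℝ}

theorem GramRealizesOn.exists_extend (hX : X.PosSemidef) {S C : Finset V} {g : V → E}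
    (hg : GramRealizesOn X g C) (hCS : C ⊆ S) (hS : #S ≤ finrank ℝ E) :
    ∃ g' : V → E, GramRealizesOn X g' S ∧ Set.EqOn g' g (↑S \ ↑C)ᶜ := by
  classical
  obtain ⟨f, hf⟩ := (hX.submatrix ((↑) : S → V)).exists_gram_eq (E := E) (by simpa using hS)
  have hfC : gram ℝ (fun c : C => f ⟨c, hCS c.2⟩) = gram ℝ (fun c : C => g c) := by
    ext a b
    simpa [gram_apply, hg a a.2 b b.2] using congr_fun₂ hf ⟨a, hCS a.2⟩ ⟨b, hCS b.2⟩
  obtain ⟨O, hO⟩ := exists_linearIsometry_comp_eq_of_gram_eq hfC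
  refine ⟨fun v => if h : v ∈ S then O (f ⟨v, h⟩) else g v, fun u hu v hv => ?_, fun v hv => ?_⟩
  · simpa [hu, hv, gram_apply] using congr_fun₂ hf ⟨u, hu⟩ ⟨v, hv⟩
  · by_cases h : v ∈ S
    · have hvC : v ∈ C := by simpa [h] using hv
      simpa [h] using congr_fun hO ⟨v, hvC⟩
    · simp [h]

end GramRealization

namespace SimpleGraph

variable {I : Type*} {T : SimpleGraph I}

theorem exists_isPath_of_preconnected_induce {s : Set I} (hs : (T.induce s).Preconnected)
    {a b : I} (ha : a ∈ s) (hb : b ∈ s) : ∃ p : T.Walk a b, p.IsPath ∧ ∀ x ∈ p.support, x ∈ s := by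
  obtain ⟨q, hq⟩ := (hs ⟨a, ha⟩ ⟨b, hb⟩).exists_isPath
  refine ⟨q.map (Embedding.induce s).toHom, hq.map Subtype.val_injective, fun x hx => ?_⟩
  replace hx : x ∈ (q.map (Embedding.induce s).toHom).support := hx
  rw [Walk.support_map, List.mem_map] at hx
  obtain ⟨⟨y, hy⟩, -, rfl⟩ := hx
  exact hy

theorem IsAcyclic.mem_of_adj_of_preconnected_induce (hT : T.IsAcyclic) {s t : Set I}
    (hs : (T.induce s).Preconnected) (ht : (T.induce t).Preconnected) {i p j : I}
    (hadj : T.Adj p j) (his : i ∈ s) (hps : p ∈ s) (hjs : j ∉ s) (hit : i ∈ t) (hjt : j ∈ t) :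
    p ∈ t := by
  obtain ⟨q, hq, hqs⟩ := exists_isPath_of_preconnected_induce hs his hps
  obtain ⟨q', hq', hq't⟩ := exists_isPath_of_preconnected_induce ht hit hjt
  -- the path from `i` to `j` through `s` and `p` is the unique one, which runs inside `t`
  have hqj : (q.concat hadj).IsPath := hq.concat (fun h => hjs (hqs j h)) hadj
  have : q.concat hadj = q' :=
    congrArg Subtype.val ((hT.subsingleton_path i j).elim ⟨_, hqj⟩ ⟨_, hq'⟩)
  exact hq't p (this ▸ by simp)

end SimpleGraph

section TreeDecomposition

variable {I V E : Type*} [NormedAddCommGroup E] [InnerProductSpace ℝ E]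
  {T : SimpleGraph I} {bag : I → Finset V} {X : Matrix V V ℝ}

def IsGramRealizableSubtree (T : SimpleGraph I) (bag : I → Finset V) (X : Matrix V V ℝ)
    (E : Type*) [NormedAddCommGroup E] [InnerProductSpace ℝ E] (J : Finset I) : Prop :=
  (T.induce (J : Set I)).Preconnected ∧ ∃ g : V → E, ∀ i ∈ J, GramRealizesOn X g (bag i)

variable [FiniteDimensional ℝ E]

theorem isGramRealizableSubtree_singleton (hX : X.PosSemidef) {i : I}
    (hcard : #(bag i) ≤ finrank ℝ E) : IsGramRealizableSubtree T bag X E {i} := by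
  have h₀ : GramRealizesOn X (0 : V → E) ∅ := by simp [GramRealizesOn]
  obtain ⟨g, hg, -⟩ := h₀.exists_extend hX (empty_subset (bag i)) hcard
  refine ⟨?_, g, by simpa using hg⟩
  rw [coe_singleton]
  exact Preconnected.of_subsingleton

theorem IsGramRealizableSubtree.insert_of_adj [DecidableEq I] (hT : T.IsAcyclic)
    (hX : X.PosSemidef) (hbag : ∀ v, (T.induce {i | v ∈ bag i}).Preconnected) {J : Finset I}
    (hJ : IsGramRealizableSubtree T bag X E J) {p j : I} (hadj : T.Adj p j) (hp : p ∈ J)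
    (hj : j ∉ J) (hcard : #(bag j) ≤ finrank ℝ E) :
    IsGramRealizableSubtree T bag X E (insert j J) := by
  classical
  obtain ⟨hJconn, g, hg⟩ := hJ
  refine ⟨?_, ?_⟩
  · rw [coe_insert, Set.insert_eq, Set.union_comm]
    exact (connected_induce_union hJconn Preconnected.of_subsingleton hp
      (Set.mem_singleton j) hadj).preconnected
  have hgC : GramRealizesOn X g (bag j ∩ bag p) := fun u hu v hv =>
    hg p hp u (mem_inter.1 hu).2 v (mem_inter.1 hv).2
  obtain ⟨g', hg'j, hg'g⟩ := hgC.exists_extend hX inter_subset_left hcard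
  refine ⟨g', forall_mem_insert _ _ _ |>.2 ⟨hg'j, fun i hi u hu v hv => ?_⟩⟩
  -- a vertex of `bag j` that also lies in a bag of `J` lies in `bag p`, where `g'` agrees with `g`
  have hagree : ∀ w ∈ bag i, g' w = g w := fun w hw => hg'g fun ⟨hwj, hwp⟩ =>
    hwp (mem_inter.2 ⟨hwj, hT.mem_of_adj_of_preconnected_induce hJconn (hbag w) hadj
      (mem_coe.2 hi) (mem_coe.2 hp) (mt mem_coe.1 hj) hw hwj⟩)
  rw [hagree u hu, hagree v hv]
  exact hg i hi u hu v hv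

theorem IsGramRealizableSubtree.exists_superset_of_walk (hT : T.IsAcyclic) (hX : X.PosSemidef)
    (hbag : ∀ v, (T.induce {i | v ∈ bag i}).Preconnected)
    (hcard : ∀ i, #(bag i) ≤ finrank ℝ E) {a b : I} (w : T.Walk a b) {J : Finset I}
    (hJ : IsGramRealizableSubtree T bag X E J) (ha : a ∈ J) :
    ∃ J', J ⊆ J' ∧ b ∈ J' ∧ IsGramRealizableSubtree T bag X E J' := by
  classical
  induction w generalizing J with
  | nil => exact ⟨J, subset_rfl, ha, hJ⟩
  | @cons a c b hac w ih =>
    by_cases hc : c ∈ J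
    · exact ih hJ hc
    · obtain ⟨J', hJJ', hb, hJ'⟩ :=
        ih (hJ.insert_of_adj hT hX hbag hac ha hc (hcard c)) (mem_insert_self c J)
      exact ⟨J', (subset_insert c J).trans hJJ', hb, hJ'⟩

theorem exists_isGramRealizableSubtree_superset (hT : T.IsTree) (hX : X.PosSemidef)
    (hbag : ∀ v, (T.induce {i | v ∈ bag i}).Preconnected)
    (hcard : ∀ i, #(bag i) ≤ finrank ℝ E) (R : Finset I) :
    ∃ J, R ⊆ J ∧ J.Nonempty ∧ IsGramRealizableSubtree T bag X E J := by
  classical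
  induction R using Finset.induction_on with
  | empty =>
    obtain ⟨i⟩ := hT.connected.nonempty
    exact ⟨{i}, empty_subset _, singleton_nonempty i,
      isGramRealizableSubtree_singleton hX (hcard i)⟩
  | insert i R _ ih =>
    obtain ⟨J, hRJ, ⟨a, ha⟩, hJ⟩ := ih
    obtain ⟨J', hJJ', hi, hJ'⟩ :=
      hJ.exists_superset_of_walk hT.isAcyclic hX hbag hcard (hT.connected a i).some ha
    exact ⟨J', insert_subset hi (hRJ.trans hJJ'), ⟨i, hi⟩, hJ'⟩

theorem exists_gramRealization_of_treeDecomposition [Finite V] (hT : T.IsTree)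
    (hX : X.PosSemidef) (hbag : ∀ v, (T.induce {i | v ∈ bag i}).Preconnected)
    (hcard : ∀ i, #(bag i) ≤ finrank ℝ E) :
    ∃ g : V → E, ∀ u v, (∃ i, u ∈ bag i ∧ v ∈ bag i) → ⟪g u, g v⟫_ℝ = X u v := by
  choose node hnode using fun q : {q : V × V // ∃ i, q.1 ∈ bag i ∧ q.2 ∈ bag i} => q.2
  obtain ⟨J, hRJ, -, -, g, hg⟩ :=
    exists_isGramRealizableSubtree_superset hT hX hbag hcard (Set.finite_range node).toFinset
  refine ⟨g, fun u v huv => ?_⟩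
  have hJ : node ⟨(u, v), huv⟩ ∈ J := hRJ (by simp)
  exact hg _ hJ u (hnode _).1 v (hnode _).2

end TreeDecomposition

/-- If `G` is a partial `k`-tree (equivalently, a graph of treewidth at most `k`, i.e.,
it admits a tree decomposition with all bags of size at most `k + 1`), then
`gd(G) ≤ k + 1`. -/
theorem gd_le_of_treewidth_le {V : Type} [Fintype V] (G : SimpleGraph V) (k : ℕ)
    (h : ∃ (I : Type) (T : SimpleGraph I) (bag : I → Finset V),
      T.IsTree ∧
      (∀ i, (bag i).card ≤ k + 1) ∧
      (∀ v, ∃ i, v ∈ bag i) ∧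
      (∀ u v, G.Adj u v → ∃ i, u ∈ bag i ∧ v ∈ bag i) ∧
      (∀ v, (T.induce {i : I | v ∈ bag i}).Connected)) :
    gd G ≤ k + 1 := by
  obtain ⟨I, T, bag, hT, hcard, hcover, hedge, hconn⟩ := h
  refine Nat.sInf_le ⟨le_add_self, fun X hX => ?_⟩
  obtain ⟨g, hg⟩ := exists_gramRealization_of_treeDecomposition
    (E := EuclideanSpace ℝ (Fin (k + 1))) hT hX (fun v => (hconn v).preconnected)
    (by simpa using hcard)
  refine ⟨gram ℝ g, posSemidef_gram ℝ g, (rank_gram_le_finrank g).trans (by simp),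
    fun v => hg v v ?_, fun u v huv => hg u v (hedge u v huv)⟩
  obtain ⟨i, hi⟩ := hcover v
  exact ⟨i, hi, hi⟩
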